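/- arXiv:2204.11760 — 4 statements merged into one kernel-verified Lean document; each statement's English description precedes it below -/
import Mathlib

section
/- In the preferential attachment model, the conditional expectation of x_{t+1} given Γ_t satisfies E(x_{t+1} | Γ_t) = (1 - m_{t+1})(1 - (1 - y_{t+1}) m_{t+1}) x_t + y_{t+1}. -/
/-- The conditional expectation of `x_{t+1}` given `Γ_t`:
under the four-point one-step transition distribution of the leaf count,
`E(x_{t+1} | Γ_t) = (1-m_{t+1})(1-(1-y_{t+1})m_{t+1}) x_t + y_{t+1}`. -/
theorem conditional_mean_one_step
    (y m x : ℝ) (hy : y = 0 ∨ y = 1)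
    (p1 p2 p3 p4 : ℝ)
    (hp1 : p1 = y * (1 - m * x))
    (hp2 : p2 = y * (m * x) + (1 - y) * (1 - m * x) ^ 2)
    (hp3 : p3 = (1 - y) * (2 * (m * x) * (1 - m * x) + x * m ^ 2))
    (hp4 : p4 = (1 - y) * (x - 1) * x * m ^ 2) :
    p1 * (x + 1) + p2 * x + p3 * (x - 1) + p4 * (x - 2)
      = (1 - m) * (1 - (1 - y) * m) * x + y := by
  subst hp1 hp2 hp3 hp4
  rcases hy with h | h <;> subst h <;> ring
end

section
/- The conditional variance of the one-step martingale increment satisfies E[(x_t - (1-m_t)(1-(1-y_t)m_t) x_{t-1} - y_t)^2 | Γ_{t-1}] = (2 - y_t)(1 - m_t x_{t-1}) m_t x_{t-1} + [2(1-y_t)(2-y_t) m_t - (1-y_t)^2 m_t^2] m_t^2 x_{t-1}^2 + 3 m_t^2 (y_t - 1) x_{t-1}. -/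
/-- Conditional variance formula for the centered one-step increment of the
leaf count: under the four-point transition distribution,
`E[(x_t - (1-m)(1-(1-y)m) x_{t-1} - y)^2 | Γ_{t-1}]` equals the displayed
polynomial expression. Here `x` stands for `x_{t-1}`, `m = m_t`, `y = y_t`. -/
theorem conditional_second_moment_formula
    (y m x : ℝ) (hy : y = 0 ∨ y = 1)
    (p1 p2 p3 p4 c : ℝ)
    (hp1 : p1 = y * (1 - m * x))
    (hp2 : p2 = y * (m * x) + (1 - y) * (1 - m * x) ^ 2)
    (hp3 : p3 = (1 - y) * (2 * (m * x) * (1 - m * x) + x * m ^ 2))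
    (hp4 : p4 = (1 - y) * (x - 1) * x * m ^ 2)
    (hc : c = (1 - m) * (1 - (1 - y) * m) * x + y) :
    p1 * ((x + 1) - c) ^ 2 + p2 * (x - c) ^ 2 + p3 * ((x - 1) - c) ^ 2
        + p4 * ((x - 2) - c) ^ 2
      = (2 - y) * (1 - m * x) * (m * x)
        + (2 * (1 - y) * (2 - y) * m - (1 - y) ^ 2 * m ^ 2) * m ^ 2 * x ^ 2
        + 3 * m ^ 2 * (y - 1) * x := by
  subst hp1 hp2 hp3 hp4 hc; rcases hy with h | h <;> subst h <;> ring
end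

section
/- Under Assumption A2 (v_t / t ≥ p > 0 for all t), the expected number of leaves grows linearly: 0 < liminf_{t→∞} Ex_t / t ≤ limsup_{t→∞} Ex_t / t ≤ 1. -/
open Filter

private lemma exp_neg_two_le_aux (u : ℝ) (h0 : 0 ≤ u) (h1 : u ≤ 1/2) :
    Real.exp (-(2*u)) ≤ 1 - u := by
  have h2 : (1:ℝ) + 2*u ≤ Real.exp (2*u) := by
    have := Real.add_one_le_exp (2*u); linarith
  have h3 : Real.exp (-(2*u)) * Real.exp (2*u) = 1 := by
    rw [← Real.exp_add]; simp
  have h4 : (0:ℝ) < Real.exp (2*u) := Real.exp_pos _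
  nlinarith [Real.exp_pos (-(2*u)),
    mul_nonneg (by linarith : (0:ℝ) ≤ 1 - u) (by linarith : (0:ℝ) ≤ Real.exp (2*u) - (1 + 2*u))]

set_option maxHeartbeats 1000000 in
/-- Under Assumption A2 (`v_t / t ≥ p > 0`), the expected number of leaves
grows linearly: `0 < liminf Ex_t/t ≤ limsup Ex_t/t ≤ 1`. Here `Ex` satisfies
the one-step mean recursion with `y_t = v_t - v_{t-1} ∈ {0,1}`,
`m_t = (1+a_t)/(2t-1+a_t v_{t-1})`, `a_t > -1` bounded. -/
theorem expected_leaves_linear_growth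
    (a v Ex : ℕ → ℝ) (p : ℝ) (hp : 0 < p)
    (hA2 : ∀ t : ℕ, 0 < t → p ≤ v t / t)
    (hv0 : v 0 = 1)
    (hy : ∀ t : ℕ, 1 ≤ t → v t - v (t - 1) = 0 ∨ v t - v (t - 1) = 1)
    (ha : ∀ t, -1 < a t) (hab : ∃ M, ∀ t, |a t| ≤ M)
    (hEx0 : Ex 0 = 1)
    (hrec : ∀ t : ℕ, 1 ≤ t →
      Ex t = (1 - (1 + a t) / (2 * t - 1 + a t * v (t - 1)))
          * (1 - (1 - (v t - v (t - 1))) * ((1 + a t) / (2 * t - 1 + a t * v (t - 1))))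
          * Ex (t - 1) + (v t - v (t - 1)))
    (hle : ∀ t : ℕ, Ex t ≤ t + 1) :
    0 < liminf (fun t : ℕ => Ex t / t) atTop ∧
    liminf (fun t : ℕ => Ex t / t) atTop ≤ limsup (fun t : ℕ => Ex t / t) atTop ∧
    limsup (fun t : ℕ => Ex t / t) atTop ≤ 1 := by
  classical
  obtain ⟨M, hM⟩ := hab
  have hM0 : 0 ≤ M := (abs_nonneg (a 0)).trans (hM 0)
  set q : ℝ := min p 1 with hq_def
  have hq0 : 0 < q := lt_min hp one_pos
  have hq1 : q ≤ 1 := min_le_right _ _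
  have hA2' : ∀ t : ℕ, 0 < t → q * t ≤ v t := by
    intro t ht
    have ht' : (0:ℝ) < t := by exact_mod_cast ht
    have h := (min_le_left p 1).trans (hA2 t ht)
    calc q * t ≤ (v t / t) * t := by
          apply mul_le_mul_of_nonneg_right h ht'.le
      _ = v t := by field_simp
  -- basic bounds on v
  have hv_bound : ∀ s : ℕ, 1 ≤ v s ∧ v s ≤ s + 1 := by
    intro s
    induction s with
    | zero => simp [hv0]
    | succ n ih =>
      obtain ⟨ih1, ih2⟩ := ih
      have h := hy (n+1) (by omega)
      simp only [Nat.add_sub_cancel] at h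
      rcases h with h | h <;> constructor <;> push_cast at ih2 ⊢ <;> linarith
  have hv_mono : ∀ s t : ℕ, s ≤ t → v s ≤ v t := by
    intro s t hst
    induction t, hst using Nat.le_induction with
    | base => exact le_refl _
    | succ n hn ih =>
      have h := hy (n+1) (by omega)
      simp only [Nat.add_sub_cancel] at h
      rcases h with h | h <;> linarith
  have hvle : ∀ t : ℕ, 1 ≤ t → v (t-1) ≤ (t:ℝ) := by
    intro t ht
    have h := (hv_bound (t-1)).2
    have hc : ((t-1:ℕ):ℝ) = (t:ℝ) - 1 := by
      rw [Nat.cast_sub ht]; norm_num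
    rw [hc] at h; linarith
  -- the step probability m
  set m : ℕ → ℝ := fun t => (1 + a t) / (2 * t - 1 + a t * v (t - 1)) with hm_def
  have hrec' : ∀ t : ℕ, 1 ≤ t →
      Ex t = (1 - m t) * (1 - (1 - (v t - v (t-1))) * m t) * Ex (t-1) + (v t - v (t-1)) := by
    intro t ht; exact hrec t ht
  have hD : ∀ t : ℕ, 1 ≤ t → (t:ℝ) - 1 ≤ 2 * t - 1 + a t * v (t - 1) := by
    intro t ht
    have h1 : 1 ≤ v (t-1) := (hv_bound (t-1)).1
    have h2 : v (t-1) ≤ (t:ℝ) := hvle t ht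
    nlinarith [ha t, mul_nonneg (by linarith [ha t] : (0:ℝ) ≤ a t + 1)
      (by linarith : (0:ℝ) ≤ v (t-1))]
  have hDpos : ∀ t : ℕ, 1 ≤ t → 0 < 2 * (t:ℝ) - 1 + a t * v (t - 1) := by
    intro t ht
    rcases Nat.lt_or_ge t 2 with h2 | h2
    · obtain rfl : t = 1 := by omega
      norm_num [hv0]
      linarith [ha 1]
    · have := hD t ht
      have : (2:ℝ) ≤ t := by exact_mod_cast h2
      linarith [hD t ht]
  have hm_facts : ∀ t : ℕ, 1 ≤ t → 0 ≤ m t ∧ m t ≤ 1 := by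
    intro t ht
    have hDp := hDpos t ht
    have h1 : 1 ≤ v (t-1) := (hv_bound (t-1)).1
    have h2 : v (t-1) ≤ (t:ℝ) := hvle t ht
    have htR : (1:ℝ) ≤ t := by exact_mod_cast ht
    constructor
    · exact div_nonneg (by linarith [ha t]) hDp.le
    · rw [hm_def]
      simp only
      rw [div_le_one hDp]
      nlinarith [mul_nonneg (by linarith [ha t] : (0:ℝ) ≤ a t + 1)
        (by linarith : (0:ℝ) ≤ v (t-1) - 1)]
  set α : ℝ := 2*(1+M) with hα_def
  have hα2 : 2 ≤ α := by rw [hα_def]; linarith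
  have hα0 : (0:ℝ) < α := by linarith
  have hm_small : ∀ t : ℕ, 2 ≤ t → m t ≤ α / t := by
    intro t ht
    have htR : (2:ℝ) ≤ t := by exact_mod_cast ht
    have hD' := hD t (by omega)
    have h1 : m t ≤ (1+M)/((t:ℝ)-1) := by
      apply div_le_div₀ (by linarith) _ (by linarith) hD'
      have := abs_le.mp (hM t); linarith
    refine h1.trans ?_
    rw [div_le_div_iff₀ (by linarith) (by linarith)]
    nlinarith [mul_nonneg (by linarith : (0:ℝ) ≤ 1+M) (by linarith : (0:ℝ) ≤ (t:ℝ)-2)]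
  -- nonnegativity of Ex
  have hEx_nonneg : ∀ t : ℕ, 0 ≤ Ex t := by
    intro t
    induction t with
    | zero => rw [hEx0]; norm_num
    | succ n ih =>
      have hr := hrec' (n+1) (by omega)
      simp only [Nat.add_sub_cancel] at hr
      have hyn := hy (n+1) (by omega)
      simp only [Nat.add_sub_cancel] at hyn
      obtain ⟨h0, h1⟩ := hm_facts (n+1) (by omega)
      rcases hyn with h | h <;> rw [hr, h] <;>
        nlinarith [mul_nonneg (mul_nonneg (by linarith : (0:ℝ) ≤ 1 - m (n+1))
            (by linarith : (0:ℝ) ≤ 1 - m (n+1))) ih,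
          mul_nonneg (mul_nonneg (by linarith : (0:ℝ) ≤ 1 - m (n+1))
            (by norm_num : (0:ℝ) ≤ (1:ℝ))) ih]
  -- key lower bound via products
  have key : ∀ s0 s : ℕ, s0 ≤ s →
      (∏ j ∈ Finset.Ioc s0 s, (1 - m j)^2) * (v s - v s0) ≤ Ex s := by
    intro s0 s hs
    induction s, hs using Nat.le_induction with
    | base => simpa using hEx_nonneg s0
    | succ n hn ih =>
      have hr := hrec' (n+1) (by omega)
      simp only [Nat.add_sub_cancel] at hr
      have hyn := hy (n+1) (by omega)
      simp only [Nat.add_sub_cancel] at hyn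
      obtain ⟨hm0, hm1⟩ := hm_facts (n+1) (by omega)
      rw [Finset.prod_Ioc_succ_top hn]
      set Q := ∏ j ∈ Finset.Ioc s0 n, (1 - m j)^2 with hQdef
      have hQ0 : 0 ≤ Q := Finset.prod_nonneg (fun j _ => sq_nonneg _)
      have hQ1 : Q ≤ 1 := by
        apply Finset.prod_le_one (fun j _ => sq_nonneg _)
        intro j hj
        have hj1 : 1 ≤ j := by
          have := (Finset.mem_Ioc.mp hj).1; omega
        obtain ⟨hj0, hj2⟩ := hm_facts j hj1
        nlinarith
      have hEn := hEx_nonneg n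
      have hint1 := mul_le_mul_of_nonneg_left ih (sq_nonneg (1 - m (n+1)))
      have h1 : (1 - m (n+1))^2 * Ex n ≤ (1 - m (n+1)) * Ex n := by
        nlinarith [mul_nonneg (mul_nonneg hm0 (by linarith : (0:ℝ) ≤ 1 - m (n+1))) hEn]
      have h2 : Q * (1 - m (n+1))^2 ≤ 1 := by nlinarith [sq_nonneg (1 - m (n+1))]
      rcases hyn with h | h
      · have hveq : v (n+1) = v n := by linarith
        rw [hr, h, hveq]
        nlinarith [hint1]
      · have hveq : v (n+1) = v n + 1 := by linarith
        rw [hr, h, hveq]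
        nlinarith [hint1]
  -- the eventual lower bound
  have hmain : ∀ᶠ t : ℕ in atTop, Real.exp (-(8*α/q)) * q / 4 ≤ Ex t / t := by
    rw [eventually_atTop]
    refine ⟨⌈(4*α+4)/q⌉₊ + 1, fun t ht => ?_⟩
    have hceil : (⌈(4*α+4)/q⌉₊ : ℕ) ≤ t := by omega
    have htR : (4*α+4)/q ≤ (t:ℝ) :=
      le_trans (Nat.le_ceil _) (by exact_mod_cast hceil)
    have hqt : 4*α+4 ≤ q*t := by
      rw [div_le_iff₀ hq0] at htR; nlinarith
    have ht12 : (12:ℝ) ≤ q*t := by linarith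
    have htR2 : (12:ℝ) ≤ t := by nlinarith [Nat.cast_nonneg (α := ℝ) t]
    have htpos : (0:ℝ) < t := by linarith
    set s0 : ℕ := ⌈q*(t:ℝ)/2⌉₊ with hs0_def
    have hs0_lb : q*(t:ℝ)/2 ≤ (s0:ℝ) := Nat.le_ceil _
    have hs0_ub : (s0:ℝ) ≤ q*(t:ℝ)/2 + 1 := le_of_lt (Nat.ceil_lt_add_one (by positivity))
    have hs0_le_t : s0 ≤ t := by
      have : (s0:ℝ) ≤ (t:ℝ) := by nlinarith
      exact_mod_cast this
    have hs0_big : 2*α + 2 ≤ (s0:ℝ) := by linarith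
    have hs0R : (0:ℝ) < s0 := by linarith
    -- per-factor bound
    have hfac : ∀ j ∈ Finset.Ioc s0 t, Real.exp (-(2*(α/(s0:ℝ))))^2 ≤ (1 - m j)^2 := by
      intro j hj
      obtain ⟨hj1, hj2⟩ := Finset.mem_Ioc.mp hj
      have hs0n : 1 ≤ s0 := by
        by_contra hcon
        have : s0 = 0 := by omega
        rw [this] at hs0R; norm_num at hs0R
      have hj2' : 2 ≤ j := by omega
      have hjR : (s0:ℝ) ≤ (j:ℝ) := by exact_mod_cast le_of_lt hj1
      have h1 : m j ≤ α/(j:ℝ) := hm_small j hj2'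
      have h2 : α/(j:ℝ) ≤ α/(s0:ℝ) := by
        apply div_le_div_of_nonneg_left hα0.le hs0R hjR
      have hu2 : α/(s0:ℝ) ≤ 1/2 := by
        rw [div_le_div_iff₀ hs0R (by norm_num : (0:ℝ) < 2)]
        linarith
      have hu0 : (0:ℝ) ≤ α/(s0:ℝ) := by positivity
      have h3 : Real.exp (-(2*(α/(s0:ℝ)))) ≤ 1 - α/(s0:ℝ) := exp_neg_two_le_aux _ hu0 hu2
      have h4 : Real.exp (-(2*(α/(s0:ℝ)))) ≤ 1 - m j := by linarith
      exact pow_le_pow_left₀ (Real.exp_pos _).le h4 2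
    have key6 : (α/(s0:ℝ))*((t:ℝ)-(s0:ℝ)) ≤ 2*α/q := by
      have e1 : (α/(s0:ℝ))*((t:ℝ)-(s0:ℝ)) ≤ (α/(s0:ℝ))*(t:ℝ) := by
        apply mul_le_mul_of_nonneg_left (by linarith) (by positivity)
      have e2 : (α/(s0:ℝ))*(t:ℝ) ≤ 2*α/q := by
        rw [div_mul_eq_mul_div, div_le_div_iff₀ hs0R hq0]
        nlinarith [mul_le_mul_of_nonneg_left hs0_lb (by linarith : (0:ℝ) ≤ 2*α)]
      linarith
    have hprod : Real.exp (-(8*α/q)) ≤ ∏ j ∈ Finset.Ioc s0 t, (1 - m j)^2 := by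
      have h5 : (Real.exp (-(2*(α/(s0:ℝ))))^2)^(t - s0)
          ≤ ∏ j ∈ Finset.Ioc s0 t, (1 - m j)^2 := by
        calc (Real.exp (-(2*(α/(s0:ℝ))))^2)^(t - s0)
            = ∏ _j ∈ Finset.Ioc s0 t, Real.exp (-(2*(α/(s0:ℝ))))^2 := by
              rw [Finset.prod_const, Nat.card_Ioc]
          _ ≤ _ := Finset.prod_le_prod (fun j _ => by positivity) hfac
      refine le_trans ?_ h5
      have hcast : ((2*(t-s0):ℕ):ℝ) = 2*((t:ℝ)-(s0:ℝ)) := by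
        push_cast [Nat.cast_sub hs0_le_t]; ring
      calc Real.exp (-(8*α/q))
          ≤ Real.exp (((2*(t-s0):ℕ):ℝ) * (-(2*(α/(s0:ℝ))))) := by
            apply Real.exp_le_exp.mpr
            rw [hcast]
            have h4 := mul_le_mul_of_nonneg_left key6 (by norm_num : (0:ℝ) ≤ 4)
            ring_nf at h4 ⊢
            linarith [h4]
        _ = (Real.exp (-(2*(α/(s0:ℝ))))^2)^(t-s0) := by
            rw [Real.exp_nat_mul, pow_mul]
    have hkey := key s0 t hs0_le_t
    have hvt : q*(t:ℝ) ≤ v t := hA2' t (by omega)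
    have hvs0 : v s0 ≤ (s0:ℝ) + 1 := (hv_bound s0).2
    have hvdiff : q*(t:ℝ)/2 - 2 ≤ v t - v s0 := by linarith
    have hExt : Real.exp (-(8*α/q)) * (q*(t:ℝ)/2 - 2) ≤ Ex t := by
      refine le_trans ?_ hkey
      exact mul_le_mul hprod hvdiff (by linarith)
        (Finset.prod_nonneg fun j _ => sq_nonneg _)
    rw [le_div_iff₀ htpos]
    nlinarith [hExt, Real.exp_pos (-(8*α/q)),
      mul_nonneg (Real.exp_pos (-(8*α/q))).le (by linarith : (0:ℝ) ≤ q*t - 8)]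
  -- boundedness facts
  have hub : ∀ᶠ t : ℕ in atTop, Ex t / t ≤ 2 := by
    filter_upwards [eventually_ge_atTop 1] with t ht
    have htpos : (0:ℝ) < t := by exact_mod_cast ht
    have htR : (1:ℝ) ≤ t := by exact_mod_cast ht
    rw [div_le_iff₀ htpos]
    have := hle t; linarith
  have hlb0 : ∀ t : ℕ, 0 ≤ Ex t / t :=
    fun t => div_nonneg (hEx_nonneg t) (Nat.cast_nonneg t)
  have hBddAbove : IsBoundedUnder (· ≤ ·) atTop (fun t : ℕ => Ex t / t) :=
    ⟨2, eventually_map.mpr hub⟩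
  have hBddBelow : IsBoundedUnder (· ≥ ·) atTop (fun t : ℕ => Ex t / t) :=
    ⟨0, eventually_map.mpr (Eventually.of_forall hlb0)⟩
  refine ⟨?_, liminf_le_limsup hBddAbove hBddBelow, ?_⟩
  · have h1 : Real.exp (-(8*α/q)) * q / 4 ≤ liminf (fun t : ℕ => Ex t / t) atTop :=
      le_liminf_of_le hBddAbove.isCoboundedUnder_ge hmain
    have : (0:ℝ) < Real.exp (-(8*α/q)) * q / 4 := by positivity
    linarith
  · refine le_of_forall_pos_le_add fun ε hε => ?_
    refine limsup_le_of_le hBddBelow.isCoboundedUnder_le ?_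
    have hev : ∀ᶠ t : ℕ in atTop, (1:ℝ)/t ≤ ε :=
      tendsto_one_div_atTop_nhds_zero_nat.eventually (eventually_le_nhds hε)
    filter_upwards [hev, eventually_ge_atTop 1] with t h1t ht
    have htpos : (0:ℝ) < t := by exact_mod_cast ht
    rw [div_le_iff₀ htpos] at h1t
    rw [div_le_iff₀ htpos]
    have := hle t
    nlinarith
end

section
/- Linear lower bound for the expected leaf count: under Assumption A2, Ex_t ≥ (∏_{j=⌊pt/2⌋+1}^{t} (1-m_j)(1-(1-y_j)m_j)) · Σ_{i=⌊pt/2⌋}^{t} y_i ≥ c_0 · p t / 2 for large t, where c_0 > 0 is the product lower bound constant. -/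
open Filter

/-- Telescoping sum over `Icc (a+1) b`. -/
lemma teleIoc_aux (v : ℕ → ℝ) (a : ℕ) : ∀ b, a ≤ b →
    ∑ i ∈ Finset.Icc (a + 1) b, (v i - v (i - 1)) = v b - v a := by
  intro b
  induction b with
  | zero =>
    intro h
    interval_cases a
    simp
  | succ b ih =>
    intro h
    rcases Nat.lt_or_ge a (b + 1) with h' | h'
    · have hab : a ≤ b := Nat.lt_succ_iff.mp h'
      rw [Finset.sum_Icc_succ_top (by omega : a + 1 ≤ b + 1), ih hab]
      simp only [Nat.add_sub_cancel]
      ring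
    · have : a = b + 1 := le_antisymm h h'
      subst this
      simp

/-- Linear lower bound for the expected leaf count: under Assumption A2,
`Ex_t ≥ (∏_{j=⌊pt/2⌋+1}^{t} (1-m_j)(1-(1-y_j)m_j)) Σ_{i=⌊pt/2⌋}^{t} y_i
      ≥ c₀ p t / 2` for all large `t`, where `y_i = v_i - v_{i-1}` and
`c₀ > 0` is the product lower bound constant. -/
theorem expected_leaves_linear_lower_bound (p c₀ x0 : ℝ) (hp : 0 < p) (hc₀ : 0 < c₀)
    (v m Ex : ℕ → ℝ) (hx0 : 0 ≤ x0)
    (hA2 : ∀ t : ℕ, 0 < t → p * t ≤ v t)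
    (hy : ∀ t : ℕ, 1 ≤ t → v t - v (t - 1) = 0 ∨ v t - v (t - 1) = 1)
    (hF : ∀ j : ℕ,
      0 ≤ (1 - m j) * (1 - (1 - (v j - v (j - 1))) * m j) ∧
      (1 - m j) * (1 - (1 - (v j - v (j - 1))) * m j) ≤ 1)
    (hEx : ∀ t : ℕ, 1 ≤ t →
      Ex t = (v t - v (t - 1))
        + ∑ i ∈ Finset.Icc 1 (t - 1), (v i - v (i - 1))
            * ∏ j ∈ Finset.Icc (i + 1) t, (1 - m j) * (1 - (1 - (v j - v (j - 1))) * m j)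
        + x0 * ∏ j ∈ Finset.Icc 1 t, (1 - m j) * (1 - (1 - (v j - v (j - 1))) * m j))
    (hprod : ∀ᶠ t : ℕ in atTop,
      c₀ ≤ ∏ j ∈ Finset.Icc (⌊p * t / 2⌋₊ + 1) t,
        (1 - m j) * (1 - (1 - (v j - v (j - 1))) * m j)) :
    ∀ᶠ t : ℕ in atTop,
      c₀ * (p * t) / 2 ≤
        (∏ j ∈ Finset.Icc (⌊p * t / 2⌋₊ + 1) t,
            (1 - m j) * (1 - (1 - (v j - v (j - 1))) * m j))
          * ∑ i ∈ Finset.Icc ⌊p * t / 2⌋₊ t, (v i - v (i - 1)) ∧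
      (∏ j ∈ Finset.Icc (⌊p * t / 2⌋₊ + 1) t,
            (1 - m j) * (1 - (1 - (v j - v (j - 1))) * m j))
          * ∑ i ∈ Finset.Icc ⌊p * t / 2⌋₊ t, (v i - v (i - 1)) ≤ Ex t := by
  have hy0 : ∀ i : ℕ, 1 ≤ i → 0 ≤ v i - v (i - 1) := by
    intro i hi; rcases hy i hi with h | h <;> linarith
  have hy1 : ∀ i : ℕ, 1 ≤ i → v i - v (i - 1) ≤ 1 := by
    intro i hi; rcases hy i hi with h | h <;> linarith
  by_cases hp1 : p ≤ 1
  swap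
  · -- If `p > 1`, the hypotheses are contradictory.
    exfalso
    obtain ⟨t, ht⟩ := exists_nat_gt (max (v 0 / (p - 1)) 1)
    have ht1 : (1 : ℝ) < t := lt_of_le_of_lt (le_max_right _ _) ht
    have htpos : 0 < t := by exact_mod_cast lt_trans zero_lt_one ht1
    have hsum : v t - v 0 = ∑ i ∈ Finset.Icc (0 + 1) t, (v i - v (i - 1)) :=
      (teleIoc_aux v 0 t (Nat.zero_le t)).symm
    have hle : ∑ i ∈ Finset.Icc (0 + 1) t, (v i - v (i - 1)) ≤ (t : ℝ) := by
      calc ∑ i ∈ Finset.Icc (0 + 1) t, (v i - v (i - 1))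
          ≤ ∑ _i ∈ Finset.Icc (0 + 1) t, (1 : ℝ) := by
            apply Finset.sum_le_sum
            intro i hi
            exact hy1 i (Finset.mem_Icc.mp hi).1
        _ = (t : ℝ) := by simp
    have hA := hA2 t htpos
    have hdiv : v 0 / (p - 1) < t := lt_of_le_of_lt (le_max_left _ _) ht
    have hvt : v 0 < (p - 1) * t := by
      rw [div_lt_iff₀ (by linarith : (0 : ℝ) < p - 1)] at hdiv
      linarith
    linarith
  -- Main case: `p ≤ 1`.
  have hZmono : Monotone (fun s : ℕ => (s : ℝ) - v s + v 0) := by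
    apply monotone_nat_of_le_succ
    intro n
    have h1 := hy1 (n + 1) (by omega)
    simp only [Nat.add_sub_cancel] at h1
    push_cast
    linarith
  have hTf : Tendsto (fun t : ℕ => ⌊p * t / 2⌋₊) atTop atTop := by
    apply tendsto_nat_floor_atTop.comp
    apply Tendsto.atTop_div_const (by norm_num : (0 : ℝ) < 2)
    exact Tendsto.const_mul_atTop hp tendsto_natCast_atTop_atTop
  -- Key step: eventually `p t / 2 ≤ S t`.
  have key : ∀ᶠ t : ℕ in atTop,
      p * t / 2 ≤ ∑ i ∈ Finset.Icc ⌊p * t / 2⌋₊ t, (v i - v (i - 1)) := by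
    by_cases hZb : ∃ s : ℕ, v 0 - 1 ≤ (s : ℝ) - v s + v 0
    · obtain ⟨s, hs⟩ := hZb
      filter_upwards [hTf.eventually_ge_atTop (s + 1), hTf.eventually_ge_atTop 1,
        eventually_ge_atTop 1] with t hts ha1 ht1
      set a := ⌊p * t / 2⌋₊ with ha_def
      have haR : (a : ℝ) ≤ p * t / 2 := Nat.floor_le (by positivity)
      have hpt : p * t ≤ (t : ℝ) := by
        have := mul_le_mul_of_nonneg_right hp1 (Nat.cast_nonneg t)
        linarith
      have hatR : (a : ℝ) ≤ (t : ℝ) := by linarith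
      have hat : a ≤ t := by exact_mod_cast hatR
      have htele : ∑ i ∈ Finset.Icc a t, (v i - v (i - 1)) = v t - v (a - 1) := by
        have h1 : a = (a - 1) + 1 := (Nat.succ_pred_eq_of_pos ha1).symm
        calc ∑ i ∈ Finset.Icc a t, (v i - v (i - 1))
            = ∑ i ∈ Finset.Icc ((a - 1) + 1) t, (v i - v (i - 1)) := by rw [← h1]
          _ = v t - v (a - 1) := teleIoc_aux v (a - 1) t (by omega)
      rw [htele]
      have hcast : ((a - 1 : ℕ) : ℝ) = (a : ℝ) - 1 := by
        rw [Nat.cast_sub ha1, Nat.cast_one]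
      have hZineq := hZmono (show s ≤ a - 1 by omega)
      simp only at hZineq
      rw [hcast] at hZineq
      have hA := hA2 t (by omega)
      linarith
    · push_neg at hZb
      have hbdd : BddAbove (Set.range fun s : ℕ => (s : ℝ) - v s + v 0) := by
        refine ⟨v 0 - 1, ?_⟩
        rintro x ⟨s, rfl⟩
        exact (hZb s).le
      have hconv : Tendsto (fun s : ℕ => (s : ℝ) - v s + v 0) atTop
          (nhds (⨆ s : ℕ, ((s : ℝ) - v s + v 0))) := tendsto_atTop_ciSup hZmono hbdd
      have hcomp : Tendsto (fun t : ℕ => ((⌊p * t / 2⌋₊ - 1 : ℕ) : ℝ)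
          - v (⌊p * t / 2⌋₊ - 1) + v 0) atTop
          (nhds (⨆ s : ℕ, ((s : ℝ) - v s + v 0))) :=
        hconv.comp ((tendsto_sub_atTop_nat 1).comp hTf)
      have hdiff : Tendsto (fun t : ℕ => ((t : ℝ) - v t + v 0)
          - (((⌊p * t / 2⌋₊ - 1 : ℕ) : ℝ) - v (⌊p * t / 2⌋₊ - 1) + v 0)) atTop
          (nhds 0) := by
        have := hconv.sub hcomp
        simpa using this
      filter_upwards [hdiff.eventually_lt_const (show (0 : ℝ) < 1 / 2 by norm_num),
        hTf.eventually_ge_atTop 1, eventually_ge_atTop 1] with t hZd ha1 ht1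
      set a := ⌊p * t / 2⌋₊ with ha_def
      have haR : (a : ℝ) ≤ p * t / 2 := Nat.floor_le (by positivity)
      have hpt : p * t ≤ (t : ℝ) := by
        have := mul_le_mul_of_nonneg_right hp1 (Nat.cast_nonneg t)
        linarith
      have hatR : (a : ℝ) ≤ (t : ℝ) := by linarith
      have hat : a ≤ t := by exact_mod_cast hatR
      have htele : ∑ i ∈ Finset.Icc a t, (v i - v (i - 1)) = v t - v (a - 1) := by
        have h1 : a = (a - 1) + 1 := (Nat.succ_pred_eq_of_pos ha1).symm
        calc ∑ i ∈ Finset.Icc a t, (v i - v (i - 1))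
            = ∑ i ∈ Finset.Icc ((a - 1) + 1) t, (v i - v (i - 1)) := by rw [← h1]
          _ = v t - v (a - 1) := teleIoc_aux v (a - 1) t (by omega)
      rw [htele]
      have hcast : ((a - 1 : ℕ) : ℝ) = (a : ℝ) - 1 := by
        rw [Nat.cast_sub ha1, Nat.cast_one]
      rw [hcast] at hZd
      linarith
  -- Combine everything.
  filter_upwards [key, hprod, eventually_ge_atTop 1, hTf.eventually_ge_atTop 1]
    with t hS hP ht1 ha1
  set a := ⌊p * t / 2⌋₊ with ha_def
  set F : ℕ → ℝ := fun j => (1 - m j) * (1 - (1 - (v j - v (j - 1))) * m j) with hF_def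
  have haR : (a : ℝ) ≤ p * t / 2 := Nat.floor_le (by positivity)
  have hpt : p * t ≤ (t : ℝ) := by
    have := mul_le_mul_of_nonneg_right hp1 (Nat.cast_nonneg t)
    linarith
  have hatR : (a : ℝ) ≤ (t : ℝ) := by linarith
  have hat : a ≤ t := by exact_mod_cast hatR
  have hFnn : ∀ j, 0 ≤ F j := fun j => (hF j).1
  have hF1 : ∀ j, F j ≤ 1 := fun j => (hF j).2
  have hPnn : 0 ≤ ∏ j ∈ Finset.Icc (a + 1) t, F j :=
    Finset.prod_nonneg fun j _ => hFnn j
  have hptnn : (0 : ℝ) ≤ p * t / 2 := by positivity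
  constructor
  · calc c₀ * (p * t) / 2 = c₀ * (p * t / 2) := by ring
      _ ≤ (∏ j ∈ Finset.Icc (a + 1) t, F j)
            * ∑ i ∈ Finset.Icc a t, (v i - v (i - 1)) :=
        mul_le_mul hP hS hptnn (le_trans hc₀.le hP)
  · -- second inequality
    have hterm : ∀ i ∈ Finset.Icc a t,
        (∏ j ∈ Finset.Icc (a + 1) t, F j) * (v i - v (i - 1))
          ≤ (v i - v (i - 1)) * ∏ j ∈ Finset.Icc (i + 1) t, F j := by
      intro i hi
      obtain ⟨hai, hit⟩ := Finset.mem_Icc.mp hi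
      have hyi : 0 ≤ v i - v (i - 1) := hy0 i (by omega)
      have hsplit : (∏ j ∈ Finset.Icc (a + 1) i, F j)
          * (∏ j ∈ Finset.Icc (i + 1) t, F j) = ∏ j ∈ Finset.Icc (a + 1) t, F j := by
        rw [Finset.Icc_add_one_left_eq_Ioc, Finset.Icc_add_one_left_eq_Ioc, Finset.Icc_add_one_left_eq_Ioc]
        exact Finset.prod_Ioc_consecutive _ hai hit
      have hle1 : ∏ j ∈ Finset.Icc (a + 1) i, F j ≤ 1 :=
        Finset.prod_le_one (fun j _ => hFnn j) (fun j _ => hF1 j)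
      have hPi : (∏ j ∈ Finset.Icc (a + 1) t, F j) ≤ ∏ j ∈ Finset.Icc (i + 1) t, F j := by
        calc (∏ j ∈ Finset.Icc (a + 1) t, F j)
            = (∏ j ∈ Finset.Icc (a + 1) i, F j) * ∏ j ∈ Finset.Icc (i + 1) t, F j :=
              hsplit.symm
          _ ≤ 1 * ∏ j ∈ Finset.Icc (i + 1) t, F j :=
              mul_le_mul_of_nonneg_right hle1 (Finset.prod_nonneg fun j _ => hFnn j)
          _ = ∏ j ∈ Finset.Icc (i + 1) t, F j := one_mul _
      calc (∏ j ∈ Finset.Icc (a + 1) t, F j) * (v i - v (i - 1))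
          = (v i - v (i - 1)) * ∏ j ∈ Finset.Icc (a + 1) t, F j := mul_comm _ _
        _ ≤ (v i - v (i - 1)) * ∏ j ∈ Finset.Icc (i + 1) t, F j :=
            mul_le_mul_of_nonneg_left hPi hyi
    have hsum1 : (∏ j ∈ Finset.Icc (a + 1) t, F j)
        * ∑ i ∈ Finset.Icc a t, (v i - v (i - 1))
        ≤ ∑ i ∈ Finset.Icc a t, (v i - v (i - 1)) * ∏ j ∈ Finset.Icc (i + 1) t, F j := by
      rw [Finset.mul_sum]
      exact Finset.sum_le_sum hterm
    have hsum2 : ∑ i ∈ Finset.Icc a t, (v i - v (i - 1)) * ∏ j ∈ Finset.Icc (i + 1) t, F j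
        ≤ ∑ i ∈ Finset.Icc 1 t, (v i - v (i - 1)) * ∏ j ∈ Finset.Icc (i + 1) t, F j := by
      apply Finset.sum_le_sum_of_subset_of_nonneg
      · exact Finset.Icc_subset_Icc ha1 le_rfl
      · intro i hi _
        exact mul_nonneg (hy0 i (Finset.mem_Icc.mp hi).1)
          (Finset.prod_nonneg fun j _ => hFnn j)
    have hsplitsum : ∑ i ∈ Finset.Icc 1 t, (v i - v (i - 1)) * ∏ j ∈ Finset.Icc (i + 1) t, F j
        = (∑ i ∈ Finset.Icc 1 (t - 1), (v i - v (i - 1)) * ∏ j ∈ Finset.Icc (i + 1) t, F j)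
          + (v t - v (t - 1)) := by
      have h := Finset.sum_Icc_succ_top (show 1 ≤ (t - 1) + 1 by omega)
        (fun i => (v i - v (i - 1)) * ∏ j ∈ Finset.Icc (i + 1) t, F j)
      simp only [show t - 1 + 1 = t from by omega] at h
      rw [h]
      have hempty : Finset.Icc (t + 1) t = ∅ := Finset.Icc_eq_empty (by omega)
      rw [hempty, Finset.prod_empty, mul_one]
    have hxnn : 0 ≤ x0 * ∏ j ∈ Finset.Icc 1 t, F j :=
      mul_nonneg hx0 (Finset.prod_nonneg fun j _ => hFnn j)
    have hExformula := hEx t ht1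
    calc (∏ j ∈ Finset.Icc (a + 1) t, F j) * ∑ i ∈ Finset.Icc a t, (v i - v (i - 1))
        ≤ ∑ i ∈ Finset.Icc 1 t, (v i - v (i - 1)) * ∏ j ∈ Finset.Icc (i + 1) t, F j :=
          le_trans hsum1 hsum2
      _ ≤ Ex t := by rw [hsplitsum, hExformula]; linarith
end
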